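/- arXiv:1311.4770 — 7 statements merged into one kernel-verified Lean document; each statement's English description precedes it below -/
import Mathlib

section
/- Let (V, ⟨·,·⟩) be a finite-dimensional real inner product space and β a linear form on V whose operator norm ‖β‖ := sup{β(v) : ⟨v,v⟩ = 1} satisfies ‖β‖ < 1, and define F(v) = √⟨v,v⟩ + β(v). Then (1 − ‖β‖)·√⟨v,v⟩ ≤ F(v) ≤ (1 + ‖β‖)·√⟨v,v⟩ for every v ∈ V; in particular F(v) > 0 for every v ≠ 0, and the fundamental tensor of L = F² is positive definite at every v ≠ 0, so that F is a Randers (Finsler) metric on V. -/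
open scoped RealInnerProductSpace

/-- The fundamental tensor of a (pseudo-)Finsler-type Lagrangian `L` at a vector `v`:
`g_v(u,w) = (1/2) · ∂²/∂t∂s L(v + t u + s w)|_{t=s=0}`. -/
noncomputable def fundTensor {V : Type*} [NormedAddCommGroup V] [NormedSpace ℝ V]
    (L : V → ℝ) (v u w : V) : ℝ :=
  (1 / 2) * fderiv ℝ (fderiv ℝ L) v u w

/-!
Normalising `v` onto the unit sphere gives `|β v| ≤ b ‖v‖`, hence the two-sided bound on `F` and
its positivity. Since `F = ‖·‖ + β` has the Hessian of the norm, `L = F²` has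
`g_v(u,u) = (dF_v u)² + F(v) · (‖v‖² ‖u‖² - ⟪v,u⟫²) / ‖v‖³`.
Both terms are nonnegative by Cauchy–Schwarz; the second vanishes only for `u = r • v`, and then
`dF_v u = r F(v) ≠ 0`.
-/

open Topology Metric

theorem abs_le_sSup_image_sphere_mul_norm {E : Type*} [NormedAddCommGroup E] [NormedSpace ℝ E]
    (β : E →L[ℝ] ℝ) (v : E) :
    |β v| ≤ sSup (β '' sphere 0 1) * ‖v‖ := by
  rcases eq_or_ne v 0 with rfl | hv
  · simp
  have hnv : 0 < ‖v‖ := norm_pos_iff.mpr hv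
  have hbdd : BddAbove (β '' sphere 0 1) := by
    refine ⟨‖β‖, ?_⟩
    rintro _ ⟨x, hx, rfl⟩
    simpa [mem_sphere_zero_iff_norm.mp hx] using (le_abs_self _).trans (β.le_opNorm x)
  have hle : ∀ x ∈ sphere (0 : E) 1, β x ≤ sSup (β '' sphere 0 1) := fun x hx =>
    le_csSup hbdd (Set.mem_image_of_mem β hx)
  set z := ‖v‖⁻¹ • v
  have hz : z ∈ sphere (0 : E) 1 := by
    simp [z, norm_smul, hnv.ne']
  have hβz : β v = ‖v‖ * β z := by
    simp [z, map_smul, hnv.ne']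
  rw [hβz, abs_mul, abs_of_pos hnv, mul_comm]
  gcongr
  refine abs_le.mpr ⟨?_, hle z hz⟩
  have hneg := hle (-z) (by simpa using hz)
  rw [map_neg] at hneg
  linarith

theorem fderiv_fderiv_sq_apply {E : Type*} [NormedAddCommGroup E] [NormedSpace ℝ E]
    {f : E → ℝ} {v : E} (hf : ContDiffAt ℝ 2 f v) (u w : E) :
    fderiv ℝ (fderiv ℝ fun x => f x ^ 2) v u w =
      2 * (fderiv ℝ f v u * fderiv ℝ f v w + f v * fderiv ℝ (fderiv ℝ f) v u w) := by
  have hdiff : ∀ᶠ x in 𝓝 v, DifferentiableAt ℝ f x :=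
    (hf.eventually (by simp)).mono fun x hx => hx.differentiableAt (by simp)
  have hev : fderiv ℝ (fun x => f x ^ 2) =ᶠ[𝓝 v] fun x => (2 * f x) • fderiv ℝ f x :=
    hdiff.mono fun x hx => by
      rw [(hx.hasFDerivAt.pow 2).fderiv]
      simp
  have hf' : DifferentiableAt ℝ (fderiv ℝ f) v :=
    (hf.fderiv_right (m := 1) (by norm_num)).differentiableAt (by simp)
  have hder : HasFDerivAt (fun x => (2 * f x) • fderiv ℝ f x) _ v :=
    (hdiff.self_of_nhds.hasFDerivAt.const_mul 2).smul hf'.hasFDerivAt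
  rw [hev.fderiv_eq, hder.fderiv]
  simp only [add_apply, smul_apply, ContinuousLinearMap.smulRight_apply, smul_eq_mul]
  ring

section InnerProductSpace

variable {E : Type*} [NormedAddCommGroup E] [InnerProductSpace ℝ E] {v : E}

theorem setOf_real_inner_self_eq_one :
    {v : E | ⟪v, v⟫ = 1} = sphere 0 1 := by
  ext v
  simp only [Set.mem_ofPred_eq, mem_sphere_zero_iff_norm, real_inner_self_eq_norm_sq]
  exact pow_eq_one_iff_of_nonneg (norm_nonneg v) two_ne_zero

theorem hasFDerivAt_norm_of_ne_zero (hv : v ≠ 0) :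
    HasFDerivAt (‖·‖) (‖v‖⁻¹ • innerSL ℝ v) v := by
  have hnv : ‖v‖ ≠ 0 := norm_ne_zero_iff.mpr hv
  convert (hasStrictFDerivAt_norm_sq v).hasFDerivAt.sqrt (pow_ne_zero 2 hnv) using 1
  · simp [Real.sqrt_sq (norm_nonneg _)]
  · ext u
    simp [Real.sqrt_sq (norm_nonneg _)]
    field_simp

theorem fderiv_fderiv_norm_apply (hv : v ≠ 0) (u w : E) :
    fderiv ℝ (fderiv ℝ (‖·‖)) v u w = (‖v‖ ^ 2 * ⟪u, w⟫ - ⟪v, u⟫ * ⟪v, w⟫) / ‖v‖ ^ 3 := by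
  have hnv : ‖v‖ ≠ 0 := norm_ne_zero_iff.mpr hv
  have hev : fderiv ℝ (‖·‖) =ᶠ[𝓝 v] fun x : E => ‖x‖⁻¹ • innerSL ℝ x := by
    filter_upwards [isOpen_compl_singleton.mem_nhds hv] with x hx
    exact (hasFDerivAt_norm_of_ne_zero hx).fderiv
  have hinv := (hasDerivAt_inv hnv).comp_hasFDerivAt v (hasFDerivAt_norm_of_ne_zero hv)
  have hder : HasFDerivAt (fun x : E => ‖x‖⁻¹ • innerSL ℝ x) _ v :=
    hinv.smul (innerSL ℝ).hasFDerivAt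
  rw [hev.fderiv_eq, hder.fderiv]
  simp only [Function.comp_apply, neg_smul, add_apply, smul_apply,
    ContinuousLinearMap.smulRight_apply, neg_apply, innerSL_apply_apply, smul_eq_mul]
  field_simp
  rfl

section Randers

variable (β : E →L[ℝ] ℝ)

theorem contDiffAt_norm_add (hv : v ≠ 0) : ContDiffAt ℝ 2 (fun x => ‖x‖ + β x) v :=
  (contDiffAt_norm ℝ hv).add β.contDiff.contDiffAt

theorem hasFDerivAt_norm_add (hv : v ≠ 0) :
    HasFDerivAt (fun x => ‖x‖ + β x) (‖v‖⁻¹ • innerSL ℝ v + β) v :=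
  (hasFDerivAt_norm_of_ne_zero hv).add β.hasFDerivAt

theorem fderiv_fderiv_norm_add (hv : v ≠ 0) :
    fderiv ℝ (fderiv ℝ fun x => ‖x‖ + β x) v = fderiv ℝ (fderiv ℝ (‖·‖)) v := by
  have hev : fderiv ℝ (fun x => ‖x‖ + β x) =ᶠ[𝓝 v] fun x => fderiv ℝ (‖·‖) x + β := by
    filter_upwards [isOpen_compl_singleton.mem_nhds hv] with x hx
    rw [(hasFDerivAt_norm_add β hx).fderiv, (hasFDerivAt_norm_of_ne_zero hx).fderiv]
  rw [hev.fderiv_eq, fderiv_add_const]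

theorem fundTensor_sq_norm_add_apply (hv : v ≠ 0) (u w : E) :
    fundTensor (fun x => (‖x‖ + β x) ^ 2) v u w =
      (⟪v, u⟫ / ‖v‖ + β u) * (⟪v, w⟫ / ‖v‖ + β w) +
        (‖v‖ + β v) * ((‖v‖ ^ 2 * ⟪u, w⟫ - ⟪v, u⟫ * ⟪v, w⟫) / ‖v‖ ^ 3) := by
  have hd : ∀ y, fderiv ℝ (fun x => ‖x‖ + β x) v y = ⟪v, y⟫ / ‖v‖ + β y := fun y => by
    simp [(hasFDerivAt_norm_add β hv).fderiv, div_eq_inv_mul]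
  rw [fundTensor, fderiv_fderiv_sq_apply (contDiffAt_norm_add β hv), hd, hd,
    fderiv_fderiv_norm_add β hv, fderiv_fderiv_norm_apply hv]
  ring

theorem fundTensor_sq_norm_add_pos (hv : v ≠ 0) (hβv : 0 < ‖v‖ + β v) {u : E} (hu : u ≠ 0) :
    0 < fundTensor (fun x => (‖x‖ + β x) ^ 2) v u u := by
  have hnv : 0 < ‖v‖ := norm_pos_iff.mpr hv
  rw [fundTensor_sq_norm_add_apply β hv, real_inner_self_eq_norm_sq]
  rcases (abs_real_inner_le_norm v u).lt_or_eq with hlt | heq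
  · have hcs : ⟪v, u⟫ * ⟪v, u⟫ < ‖v‖ ^ 2 * ‖u‖ ^ 2 := by
      nlinarith [mul_self_lt_mul_self (abs_nonneg _) hlt, abs_mul_abs_self ⟪v, u⟫]
    have hsecond : 0 < (‖v‖ + β v) * ((‖v‖ ^ 2 * ‖u‖ ^ 2 - ⟪v, u⟫ * ⟪v, u⟫) / ‖v‖ ^ 3) :=
      mul_pos hβv (div_pos (by linarith) (by positivity))
    nlinarith [mul_self_nonneg (⟪v, u⟫ / ‖v‖ + β u)]
  · obtain ⟨r, hr, rfl⟩ := (norm_inner_eq_norm_iff (𝕜 := ℝ) hv hu).mp (by rwa [Real.norm_eq_abs])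
    have hdir : ⟪v, r • v⟫ / ‖v‖ + β (r • v) = r * (‖v‖ + β v) := by
      rw [real_inner_smul_right, real_inner_self_eq_norm_sq, map_smul, smul_eq_mul]
      field_simp
    have hcs : ‖v‖ ^ 2 * ‖r • v‖ ^ 2 - ⟪v, r • v⟫ * ⟪v, r • v⟫ = 0 := by
      rw [norm_smul, real_inner_smul_right, real_inner_self_eq_norm_sq, Real.norm_eq_abs,
        mul_pow, sq_abs]
      ring
    rw [hdir, hcs]
    simp only [zero_div, mul_zero, add_zero]
    exact mul_self_pos.mpr (mul_ne_zero hr hβv.ne')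

end Randers

end InnerProductSpace

/-- If `‖β‖ := sup {β v : ⟨v,v⟩ = 1} < 1`, then the Randers-type function
`F(v) = √⟨v,v⟩ + β(v)` satisfies `(1 − ‖β‖)·√⟨v,v⟩ ≤ F(v) ≤ (1 + ‖β‖)·√⟨v,v⟩`
for every `v`; in particular `F(v) > 0` for `v ≠ 0`, and the fundamental tensor of
`L = F²` is positive definite at every `v ≠ 0`, so `F` is a Randers (Finsler) metric. -/
theorem randers_metric_of_small_beta
    {V : Type*} [NormedAddCommGroup V] [InnerProductSpace ℝ V] [FiniteDimensional ℝ V]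
    (β : V →ₗ[ℝ] ℝ)
    (F L : V → ℝ)
    (hF : ∀ v : V, F v = Real.sqrt ⟪v, v⟫ + β v)
    (hL : ∀ v : V, L v = (F v) ^ 2)
    (b : ℝ) (hb : b = sSup ((fun v : V => β v) '' {v : V | ⟪v, v⟫ = (1 : ℝ)}))
    (hb1 : b < 1) :
    (∀ v : V, (1 - b) * Real.sqrt ⟪v, v⟫ ≤ F v ∧ F v ≤ (1 + b) * Real.sqrt ⟪v, v⟫) ∧
    (∀ v : V, v ≠ 0 → 0 < F v) ∧
    (∀ v : V, v ≠ 0 → ∀ u : V, u ≠ 0 → 0 < fundTensor L v u u) := by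
  set β' : V →L[ℝ] ℝ := LinearMap.toContinuousLinearMap β
  have hsqrt (v : V) : √⟪v, v⟫ = ‖v‖ := by
    rw [real_inner_self_eq_norm_mul_norm, Real.sqrt_mul_self (norm_nonneg v)]
  have hF' (v : V) : F v = ‖v‖ + β' v := by rw [hF, hsqrt]; rfl
  have hL' : L = fun v => (‖v‖ + β' v) ^ 2 := funext fun v => by rw [hL, hF']
  have hβ (v : V) : |β' v| ≤ b * ‖v‖ := by
    rw [hb, setOf_real_inner_self_eq_one]
    exact abs_le_sSup_image_sphere_mul_norm β' v
  have hbounds (v : V) : (1 - b) * √⟪v, v⟫ ≤ F v ∧ F v ≤ (1 + b) * √⟪v, v⟫ := by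
    rw [hsqrt, hF']
    obtain ⟨hlow, hup⟩ := abs_le.mp (hβ v)
    constructor <;> linarith
  have hFpos (v : V) (hv : v ≠ 0) : 0 < F v := by
    have hlow := (hbounds v).1
    rw [hsqrt] at hlow
    exact (mul_pos (sub_pos.mpr hb1) (norm_pos_iff.mpr hv)).trans_le hlow
  refine ⟨hbounds, hFpos, fun v hv u hu => ?_⟩
  rw [hL']
  exact fundTensor_sq_norm_add_pos β' hv (hF' v ▸ hFpos v hv) hu
end

section
/- Let (V, ⟨·,·⟩) be a finite-dimensional real inner product space and W ∈ V with λ := 1 − ⟨W,W⟩ > 0, and let F be the Zermelo metric F(v) = [−⟨v,W⟩ + √(⟨v,W⟩² + ⟨v,v⟩·λ)]/λ. Define h(u,v) := (λ·⟨u,v⟩ + ⟨u,W⟩·⟨v,W⟩)/λ² and β(v) := −⟨v,W⟩/λ. Then: (i) h is an inner product on V; (ii) F(v) = √(h(v,v)) + β(v) for every v ∈ V, so F is of Randers type; (iii) sup{β(v) : h(v,v) = 1} < 1; and (iv) F(v) > 0 for every v ≠ 0. -/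
/-!
Completing the square: `λ²·h(v,v) = ⟨v,W⟩² + λ⟨v,v⟩`, so `√(h(v,v)) + β(v)` is exactly the
Zermelo expression. On the `h`-unit sphere, Cauchy–Schwarz together with `‖W‖² = 1 − λ` gives
`⟨v,W⟩² ≤ λ²‖W‖²`, hence `β ≤ ‖W‖ < 1` there.
-/

open scoped RealInnerProductSpace

namespace Zermelo

variable {V : Type*} [NormedAddCommGroup V] [InnerProductSpace ℝ V]

noncomputable def zermeloNorm (W : V) (lam : ℝ) (v : V) : ℝ :=
  (-⟪v, W⟫ + Real.sqrt (⟪v, W⟫ ^ 2 + ⟪v, v⟫ * lam)) / lam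

noncomputable def randersInner (W : V) (lam : ℝ) (u v : V) : ℝ :=
  (lam * ⟪u, v⟫ + ⟪u, W⟫ * ⟪v, W⟫) / lam ^ 2

noncomputable def randersOneForm (W : V) (lam : ℝ) (v : V) : ℝ :=
  -⟪v, W⟫ / lam

variable (W : V) (lam : ℝ)

theorem randersInner_comm (u v : V) : randersInner W lam u v = randersInner W lam v u := by
  simp only [randersInner, real_inner_comm u v]
  ring

theorem randersInner_smul_add_left (a : ℝ) (u u' v : V) :
    randersInner W lam (a • u + u') v = a * randersInner W lam u v + randersInner W lam u' v := by
  simp only [randersInner, inner_add_left, real_inner_smul_left]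
  ring

theorem randersInner_self (v : V) :
    randersInner W lam v v = (⟪v, W⟫ ^ 2 + ⟪v, v⟫ * lam) / lam ^ 2 := by
  rw [randersInner]
  ring

variable {W lam}

theorem randersInner_self_pos (hlam : 0 < lam) {v : V} (hv : v ≠ 0) :
    0 < randersInner W lam v v := by
  have hvv : 0 < ⟪v, v⟫ := real_inner_self_pos.mpr hv
  rw [randersInner_self]
  positivity

theorem zermeloNorm_eq_sqrt_randersInner_add (hlam : 0 < lam) (v : V) :
    zermeloNorm W lam v = Real.sqrt (randersInner W lam v v) + randersOneForm W lam v := by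
  rw [zermeloNorm, randersOneForm, randersInner_self, Real.sqrt_div' _ (sq_nonneg lam),
    Real.sqrt_sq hlam.le]
  ring

theorem neg_add_sqrt_sq_add_pos (a : ℝ) {c : ℝ} (hc : 0 < c) : 0 < -a + Real.sqrt (a ^ 2 + c) := by
  have : |a| < Real.sqrt (a ^ 2 + c) := by
    rw [← Real.sqrt_sq_eq_abs]
    exact Real.sqrt_lt_sqrt (sq_nonneg a) (by linarith)
  linarith [le_abs_self a]

theorem zermeloNorm_pos (hlam : 0 < lam) {v : V} (hv : v ≠ 0) : 0 < zermeloNorm W lam v :=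
  div_pos (neg_add_sqrt_sq_add_pos _ (mul_pos (real_inner_self_pos.mpr hv) hlam)) hlam

theorem randersOneForm_le_norm (hlam : 0 < lam) (hW : ‖W‖ ^ 2 = 1 - lam) {v : V}
    (hv : randersInner W lam v v = 1) : randersOneForm W lam v ≤ ‖W‖ := by
  have hunit : ⟪v, W⟫ ^ 2 + ‖v‖ ^ 2 * lam = lam ^ 2 := by
    rw [randersInner_self, div_eq_one_iff_eq (by positivity), real_inner_self_eq_norm_sq] at hv
    exact hv
  have hcs : ⟪v, W⟫ ^ 2 ≤ ‖v‖ ^ 2 * ‖W‖ ^ 2 := by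
    rw [← mul_pow]
    exact sq_le_sq' (neg_le_of_abs_le (abs_real_inner_le_norm v W)) (real_inner_le_norm v W)
  have hsq : ⟪v, W⟫ ^ 2 ≤ (lam * ‖W‖) ^ 2 := by
    rw [mul_pow, hW]
    nlinarith
  have hbound : -(lam * ‖W‖) ≤ ⟪v, W⟫ :=
    (abs_le_of_sq_le_sq' hsq (mul_nonneg hlam.le (norm_nonneg W))).1
  rw [randersOneForm, div_le_iff₀ hlam]
  linarith

end Zermelo

open Zermelo in
theorem zermelo_is_randers_general
    {V : Type*} [NormedAddCommGroup V] [InnerProductSpace ℝ V]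
    (W : V) (lam : ℝ) (hlam : lam = 1 - ⟪W, W⟫) (hlampos : 0 < lam)
    (F : V → ℝ)
    (hF : ∀ v : V, F v = (-⟪v, W⟫ + Real.sqrt (⟪v, W⟫ ^ 2 + ⟪v, v⟫ * lam)) / lam)
    (h : V → V → ℝ)
    (hh : ∀ u v : V, h u v = (lam * ⟪u, v⟫ + ⟪u, W⟫ * ⟪v, W⟫) / lam ^ 2)
    (β : V → ℝ)
    (hβ : ∀ v : V, β v = -⟪v, W⟫ / lam) :
    ((∀ u v : V, h u v = h v u) ∧
      (∀ (a : ℝ) (u u' v : V), h (a • u + u') v = a * h u v + h u' v) ∧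
      (∀ v : V, v ≠ 0 → 0 < h v v)) ∧
    (∀ v : V, F v = Real.sqrt (h v v) + β v) ∧
    sSup (β '' {v : V | h v v = 1}) < 1 ∧
    (∀ v : V, v ≠ 0 → 0 < F v) := by
  obtain rfl : F = zermeloNorm W lam := funext hF
  obtain rfl : h = randersInner W lam := funext fun u => funext (hh u)
  obtain rfl : β = randersOneForm W lam := funext hβ
  have hW : ‖W‖ ^ 2 = 1 - lam := by rw [hlam, real_inner_self_eq_norm_sq]; ring
  have hW_lt_one : ‖W‖ < 1 := (sq_lt_one_iff₀ (norm_nonneg W)).mp (by linarith)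
  have hsup : sSup (randersOneForm W lam '' {v | randersInner W lam v v = 1}) ≤ ‖W‖ :=
    Real.sSup_le (by rintro _ ⟨v, hv, rfl⟩; exact randersOneForm_le_norm hlampos hW hv)
      (norm_nonneg W)
  exact ⟨⟨randersInner_comm W lam, randersInner_smul_add_left W lam,
      fun v hv => randersInner_self_pos hlampos hv⟩,
    zermeloNorm_eq_sqrt_randersInner_add hlampos, hsup.trans_lt hW_lt_one,
    fun v hv => zermeloNorm_pos hlampos hv⟩

/-- The Zermelo metric `F(v) = (−⟨v,W⟩ + √(⟨v,W⟩² + ⟨v,v⟩λ))/λ`, with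
`λ = 1 − ⟨W,W⟩ > 0`, is of Randers type: setting
`h(u,v) = (λ⟨u,v⟩ + ⟨u,W⟩⟨v,W⟩)/λ²` and `β(v) = −⟨v,W⟩/λ`, one has
(i) `h` is an inner product on `V` (symmetric, bilinear and positive definite);
(ii) `F(v) = √(h(v,v)) + β(v)` for every `v`;
(iii) `sup {β v : h(v,v) = 1} < 1`; and (iv) `F(v) > 0` for every `v ≠ 0`. -/
theorem zermelo_is_randers
    {V : Type*} [NormedAddCommGroup V] [InnerProductSpace ℝ V] [FiniteDimensional ℝ V]
    (W : V) (lam : ℝ) (hlam : lam = 1 - ⟪W, W⟫) (hlampos : 0 < lam)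
    (F : V → ℝ)
    (hF : ∀ v : V, F v = (-⟪v, W⟫ + Real.sqrt (⟪v, W⟫ ^ 2 + ⟪v, v⟫ * lam)) / lam)
    (h : V → V → ℝ)
    (hh : ∀ u v : V, h u v = (lam * ⟪u, v⟫ + ⟪u, W⟫ * ⟪v, W⟫) / lam ^ 2)
    (β : V → ℝ)
    (hβ : ∀ v : V, β v = -⟪v, W⟫ / lam) :
    ((∀ u v : V, h u v = h v u) ∧
      (∀ (a : ℝ) (u u' v : V), h (a • u + u') v = a * h u v + h u' v) ∧
      (∀ v : V, v ≠ 0 → 0 < h v v)) ∧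
    (∀ v : V, F v = Real.sqrt (h v v) + β v) ∧
    sSup (β '' {v : V | h v v = 1}) < 1 ∧
    (∀ v : V, v ≠ 0 → 0 < F v) :=
  zermelo_is_randers_general W lam hlam hlampos F hF h hh β hβ
end

section
/- Let (V, ⟨·,·⟩) be a finite-dimensional real inner product space and ω a linear form on V, with g_L the flat standard stationary Lorentzian form on ℝ × V and F the Fermat metric. Let γ : [a,b] → ℝ × V be a smooth curve, γ(s) = (t(s), x(s)), with t'(s) > 0 and g_L(γ'(s), γ'(s)) = 0 for every s ∈ [a,b] (a future-directed lightlike curve). Then the arrival time satisfies t(b) − t(a) = ∫_a^b F(x'(s)) ds, i.e. it equals the Fermat length of the spatial projection x. -/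
/-!
Along a lightlike curve the null condition `g_L(γ', γ') = 0` reads
`⟨x', x'⟩ + ω(x')² = (t' − ω(x'))²`, and future-directedness selects the nonnegative root
`t' − ω(x') = √(⟨x', x'⟩ + ω(x')²)`, i.e. `t' = F(x')` pointwise. Integrating `t'` over
`[a, b]` gives the arrival time by the fundamental theorem of calculus.
-/

open scoped RealInnerProductSpace

/-- The flat standard stationary Lorentzian form on `ℝ × V`:
`g_L((τ,v),(σ,u)) = −τσ + τ·ω(u) + σ·ω(v) + ⟨v,u⟩`. -/
noncomputable def stdStationaryForm {V : Type*} [NormedAddCommGroup V]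
    [InnerProductSpace ℝ V] (ω : V →ₗ[ℝ] ℝ) (x y : ℝ × V) : ℝ :=
  -(x.1 * y.1) + x.1 * ω y.2 + y.1 * ω x.2 + ⟪x.2, y.2⟫

section

variable {V : Type*} [NormedAddCommGroup V] [InnerProductSpace ℝ V] (ω : V →ₗ[ℝ] ℝ)

theorem stdStationaryForm_self (τ : ℝ) (v : V) :
    stdStationaryForm ω (τ, v) (τ, v) = ⟪v, v⟫ + ω v ^ 2 - (τ - ω v) ^ 2 := by
  simp only [stdStationaryForm]
  ring

theorem sqrt_inner_self_add_sq_add_eq_of_lightlike {τ : ℝ} {v : V} (hτ : 0 < τ)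
    (hv : stdStationaryForm ω (τ, v) (τ, v) = 0) :
    Real.sqrt (⟪v, v⟫ + ω v ^ 2) + ω v = τ := by
  have hsq : ⟪v, v⟫ + ω v ^ 2 = (τ - ω v) ^ 2 := by
    rw [stdStationaryForm_self] at hv
    linarith
  -- `τ − ω v < 0` would give `(τ − ω v)² < (ω v)² ≤ ⟪v, v⟫ + (ω v)²`.
  have hnonneg : 0 ≤ τ - ω v := by
    nlinarith [real_inner_self_nonneg (x := v)]
  rw [hsq, Real.sqrt_sq hnonneg]
  ring

end

theorem arrival_time_eq_fermat_length_general
    {V : Type*} [NormedAddCommGroup V] [InnerProductSpace ℝ V]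
    (ω : V →ₗ[ℝ] ℝ)
    (F : V → ℝ)
    (hF : ∀ v : V, F v = Real.sqrt (⟪v, v⟫ + (ω v) ^ 2) + ω v)
    (a b : ℝ) (hab : a ≤ b)
    (t : ℝ → ℝ) (x : ℝ → V)
    (ht : ContDiff ℝ (⊤ : ℕ∞) t)
    (hfuture : ∀ s ∈ Set.Icc a b, 0 < deriv t s)
    (hlight : ∀ s ∈ Set.Icc a b,
      stdStationaryForm ω (deriv t s, deriv x s) (deriv t s, deriv x s) = 0) :
    t b - t a = ∫ s in a..b, F (deriv x s) := by
  have hFt : ∀ s ∈ Set.uIcc a b, deriv t s = F (deriv x s) := fun s hs => by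
    rw [Set.uIcc_of_le hab] at hs
    rw [hF]
    exact (sqrt_inner_self_add_sq_add_eq_of_lightlike ω (hfuture s hs) (hlight s hs)).symm
  calc t b - t a = ∫ s in a..b, deriv t s :=
        (intervalIntegral.integral_deriv_eq_sub
          (fun s _ => (ht.differentiable (by simp)).differentiableAt)
          ((ht.continuous_deriv (by simp)).intervalIntegrable a b)).symm
    _ = ∫ s in a..b, F (deriv x s) := intervalIntegral.integral_congr hFt

/-- Fermat's principle computation: if `γ(s) = (t(s), x(s))` is a smooth
future-directed (`t' > 0`) lightlike (`g_L(γ',γ') = 0`) curve on `[a,b]` for the flat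
standard stationary metric, then the arrival time `t(b) − t(a)` equals the Fermat
length `∫_a^b F(x'(s)) ds` of the spatial projection, where
`F(v) = √(⟨v,v⟩ + ω(v)²) + ω(v)` is the Fermat metric. -/
theorem arrival_time_eq_fermat_length
    {V : Type*} [NormedAddCommGroup V] [InnerProductSpace ℝ V] [FiniteDimensional ℝ V]
    (ω : V →ₗ[ℝ] ℝ)
    (F : V → ℝ)
    (hF : ∀ v : V, F v = Real.sqrt (⟪v, v⟫ + (ω v) ^ 2) + ω v)
    (a b : ℝ) (hab : a ≤ b)
    (t : ℝ → ℝ) (x : ℝ → V)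
    (ht : ContDiff ℝ (⊤ : ℕ∞) t) (hx : ContDiff ℝ (⊤ : ℕ∞) x)
    (hfuture : ∀ s ∈ Set.Icc a b, 0 < deriv t s)
    (hlight : ∀ s ∈ Set.Icc a b,
      stdStationaryForm ω (deriv t s, deriv x s) (deriv t s, deriv x s) = 0) :
    t b - t a = ∫ s in a..b, F (deriv x s) :=
  arrival_time_eq_fermat_length_general ω F hF a b hab t x ht hfuture hlight
end

section
/- Let (V, ⟨·,·⟩) be a finite-dimensional real inner product space and ω a linear form on V, with g_L the flat standard stationary Lorentzian form on ℝ × V and F the Fermat metric. Let p, q ∈ V and t₀ ∈ ℝ. Then there exists a smooth curve γ : [0,1] → ℝ × V, γ(s) = (t(s), x(s)), with γ(0) = (0,p), γ(1) = (t₀,q), t'(s) > 0 and g_L(γ'(s), γ'(s)) < 0 for every s (a future-directed timelike curve from (0,p) to (t₀,q)), if and only if t₀ > F(q − p). In other words, the intersection of the chronological future of (0,p) with the slice {t = t₀} is {t₀} × B⁺(p, t₀), the open forward Fermat ball of center p and radius t₀. -/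
open scoped RealInnerProductSpace

/-! For `T > 0`, completing the square in `g_L((T,v),(T,v)) = (ω v)² + ⟨v,v⟩ - (T - ω v)²` shows
that `(T, v)` is timelike iff `F v < T`. Writing `F v = ‖(v, ω v)‖ + ω v` with the Euclidean
norm on `V × ℝ` exhibits `F` as a seminorm plus a linear form, so along a future timelike curve
`F (q - p) = F (∫ x') ≤ ∫ F (x') < ∫ t' = t₀`. Conversely, if `F (q - p) < t₀` the straight line
`s ↦ (s t₀, p + s (q - p))` is future timelike. -/

open MeasureTheory Set

noncomputable section

namespace StdStationary

variable {V : Type*} [NormedAddCommGroup V] [InnerProductSpace ℝ V]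

def fermatMetric (ω : V →ₗ[ℝ] ℝ) (v : V) : ℝ :=
  √(⟪v, v⟫ + ω v ^ 2) + ω v

def IsFutureTimelike (ω : V →ₗ[ℝ] ℝ) (z : ℝ × V) : Prop :=
  0 < z.1 ∧ stdStationaryForm ω z z < 0

theorem abs_le_sqrt_inner_self_add_sq (ω : V →ₗ[ℝ] ℝ) (v : V) :
    |ω v| ≤ √(⟪v, v⟫ + ω v ^ 2) :=
  Real.abs_le_sqrt (le_add_of_nonneg_left real_inner_self_nonneg)

theorem fermatMetric_nonneg (ω : V →ₗ[ℝ] ℝ) (v : V) : 0 ≤ fermatMetric ω v := by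
  have := abs_le_sqrt_inner_self_add_sq ω v
  have := neg_abs_le (ω v)
  unfold fermatMetric
  linarith

theorem isFutureTimelike_iff_fermatMetric_lt (ω : V →ₗ[ℝ] ℝ) (T : ℝ) (v : V) :
    IsFutureTimelike ω (T, v) ↔ fermatMetric ω v < T := by
  have hsq : (0 : ℝ) ≤ ⟪v, v⟫ := real_inner_self_nonneg
  have hF := fermatMetric_nonneg ω v
  simp only [IsFutureTimelike, stdStationaryForm, fermatMetric] at hF ⊢
  constructor
  · rintro ⟨hT, hneg⟩
    -- `ω v ≥ T > 0` would give `(T - ω v)² < (ω v)²`, contradicting `hneg`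
    have hpos : 0 < T - ω v := by nlinarith
    have := (Real.sqrt_lt' (x := ⟪v, v⟫ + ω v ^ 2) hpos).2 (by nlinarith)
    linarith
  · intro hlt
    have hpos : 0 < T - ω v := by
      linarith [Real.sqrt_nonneg (⟪v, v⟫ + ω v ^ 2)]
    have hsqrt := (Real.sqrt_lt' hpos).1 (by linarith)
    exact ⟨by linarith, by nlinarith⟩

variable [FiniteDimensional ℝ V]

def graphL2 (ω : V →ₗ[ℝ] ℝ) : V →L[ℝ] WithLp 2 (V × ℝ) :=
  (WithLp.prodContinuousLinearEquiv 2 ℝ V ℝ).symm.toContinuousLinearMap.comp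
    ((ContinuousLinearMap.id ℝ V).prod (LinearMap.toContinuousLinearMap ω))

theorem fermatMetric_eq_norm_graphL2_add (ω : V →ₗ[ℝ] ℝ) (v : V) :
    fermatMetric ω v = ‖graphL2 ω v‖ + ω v := by
  simp [fermatMetric, graphL2, WithLp.prod_norm_eq_of_L2]

theorem continuous_fermatMetric (ω : V →ₗ[ℝ] ℝ) : Continuous (fermatMetric ω) := by
  simp_rw [funext (fermatMetric_eq_norm_graphL2_add ω)]
  exact (graphL2 ω).continuous.norm.add (LinearMap.continuous_of_finiteDimensional ω)

theorem fermatMetric_intervalIntegral_le (ω : V →ₗ[ℝ] ℝ) {f : ℝ → V} {a b : ℝ} (hab : a ≤ b)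
    (hf : IntervalIntegrable f volume a b) :
    fermatMetric ω (∫ s in a..b, f s) ≤ ∫ s in a..b, fermatMetric ω (f s) := by
  set ω' := LinearMap.toContinuousLinearMap ω
  have hωf : IntervalIntegrable (fun s => ω' (f s)) volume a b :=
    ⟨ω'.integrable_comp hf.1, ω'.integrable_comp hf.2⟩
  have hNf : IntervalIntegrable (fun s => ‖graphL2 ω (f s)‖) volume a b :=
    IntervalIntegrable.norm
      ⟨(graphL2 ω).integrable_comp hf.1, (graphL2 ω).integrable_comp hf.2⟩
  simp_rw [fermatMetric_eq_norm_graphL2_add]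
  calc ‖graphL2 ω (∫ s in a..b, f s)‖ + ω (∫ s in a..b, f s)
      = ‖∫ s in a..b, graphL2 ω (f s)‖ + ∫ s in a..b, ω' (f s) := by
        rw [(graphL2 ω).intervalIntegral_comp_comm hf, ω'.intervalIntegral_comp_comm hf]; rfl
    _ ≤ (∫ s in a..b, ‖graphL2 ω (f s)‖) + ∫ s in a..b, ω' (f s) := by
        gcongr; exact intervalIntegral.norm_integral_le_integral_norm hab
    _ = ∫ s in a..b, ‖graphL2 ω (f s)‖ + ω (f s) := (intervalIntegral.integral_add hNf hωf).symm

theorem fermatMetric_sub_lt_of_isFutureTimelike (ω : V →ₗ[ℝ] ℝ) {t : ℝ → ℝ} {x : ℝ → V}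
    {a b : ℝ} (hab : a < b) (ht : ContDiff ℝ 1 t) (hx : ContDiff ℝ 1 x)
    (htx : ∀ s ∈ Icc a b, IsFutureTimelike ω (deriv t s, deriv x s)) :
    fermatMetric ω (x b - x a) < t b - t a := by
  have hdt := ht.continuous_deriv le_rfl
  have hdx := hx.continuous_deriv le_rfl
  have ha : a ∈ Icc a b := left_mem_Icc.2 hab.le
  have hlt s (hs : s ∈ Icc a b) : fermatMetric ω (deriv x s) < deriv t s :=
    (isFutureTimelike_iff_fermatMetric_lt ω _ _).1 (htx s hs)
  rw [← intervalIntegral.integral_deriv_eq_sub (fun s _ => ht.differentiable one_ne_zero s)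
      (hdt.intervalIntegrable a b),
    ← intervalIntegral.integral_deriv_eq_sub (fun s _ => hx.differentiable one_ne_zero s)
      (hdx.intervalIntegrable a b)]
  calc fermatMetric ω (∫ s in a..b, deriv x s)
      ≤ ∫ s in a..b, fermatMetric ω (deriv x s) :=
        fermatMetric_intervalIntegral_le ω hab.le (hdx.intervalIntegrable a b)
    _ < ∫ s in a..b, deriv t s :=
        intervalIntegral.integral_lt_integral_of_continuousOn_of_le_of_exists_lt hab
          ((continuous_fermatMetric ω).comp hdx).continuousOn hdt.continuousOn
          (fun s hs => (hlt s (Ioc_subset_Icc_self hs)).le) ⟨a, ha, hlt a ha⟩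

end StdStationary

end

open StdStationary in
/-- In the flat standard stationary spacetime, there is a smooth future-directed
timelike curve from `(0,p)` to `(t₀,q)` if and only if `t₀ > F(q − p)`, where `F` is
the Fermat metric: the chronological future of `(0,p)` meets the slice `t = t₀` in
`{t₀} × B⁺(p,t₀)`, the open forward Fermat ball of center `p` and radius `t₀`. -/
theorem chronological_future_eq_fermat_ball
    {V : Type*} [NormedAddCommGroup V] [InnerProductSpace ℝ V] [FiniteDimensional ℝ V]
    (ω : V →ₗ[ℝ] ℝ)
    (F : V → ℝ)
    (hF : ∀ v : V, F v = Real.sqrt (⟪v, v⟫ + (ω v) ^ 2) + ω v)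
    (p q : V) (t₀ : ℝ) :
    (∃ t : ℝ → ℝ, ∃ x : ℝ → V,
      ContDiff ℝ (⊤ : ℕ∞) t ∧ ContDiff ℝ (⊤ : ℕ∞) x ∧
      t 0 = 0 ∧ x 0 = p ∧ t 1 = t₀ ∧ x 1 = q ∧
      ∀ s ∈ Set.Icc (0 : ℝ) 1, 0 < deriv t s ∧
        stdStationaryForm ω (deriv t s, deriv x s) (deriv t s, deriv x s) < 0)
    ↔ F (q - p) < t₀ := by
  obtain rfl : F = fermatMetric ω := funext hF
  constructor
  · rintro ⟨t, x, ht, hx, ht0, hx0, ht1, hx1, htx⟩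
    simpa [ht0, hx0, ht1, hx1] using fermatMetric_sub_lt_of_isFutureTimelike ω zero_lt_one
      (ht.of_le (by simp)) (hx.of_le (by simp)) htx
  · intro hlt
    refine ⟨fun s => s * t₀, fun s => p + s • (q - p), by fun_prop, by fun_prop, by simp, by simp,
      one_mul t₀, by simp, fun s _ => ?_⟩
    have hdt : deriv (fun s => s * t₀) s = t₀ := (hasDerivAt_mul_const t₀).deriv
    have hdx : deriv (fun s : ℝ => p + s • (q - p)) s = q - p := by
      simpa using (((hasDerivAt_id s).smul_const (q - p)).const_add p).deriv
    rw [hdt, hdx]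
    exact (isFutureTimelike_iff_fermatMetric_lt ω t₀ (q - p)).2 hlt
end

section
/- Let (V, ⟨·,·⟩) be a finite-dimensional real inner product space and ω a linear form on V, with g_L the flat standard stationary Lorentzian form on ℝ × V and F the Fermat metric. Let p, q ∈ V and t₀ ∈ ℝ. Then there exists a smooth curve γ : [0,1] → ℝ × V, γ(s) = (t(s), x(s)), with γ(0) = (0,p), γ(1) = (t₀,q), t'(s) > 0 and g_L(γ'(s), γ'(s)) ≤ 0 for every s (a future-directed causal curve from (0,p) to (t₀,q)), if and only if t₀ > 0 and t₀ ≥ F(q − p). -/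
/-!
A future-directed curve `s ↦ (t s, x s)` is causal exactly when `F (x') ≤ t'`. Writing
`F v = ‖(v, ω v)‖₂ + ω v`, this says that the curve `s ↦ (x s, ω (x s))` in `V × ℝ` with the
Euclidean norm has speed at most the derivative of `t - ω ∘ x`, so by the mean value inequality
its chord is at most the increment of `t - ω ∘ x`, which is `F (q - p) ≤ t₀`. Conversely the
straight segment to `(t₀, q)` is causal when `F (q - p) ≤ t₀`.
-/

open scoped RealInnerProductSpace
open Set

section

variable {V : Type*} [NormedAddCommGroup V] [InnerProductSpace ℝ V]

noncomputable def fermatMetric (ω : V →ₗ[ℝ] ℝ) (v : V) : ℝ :=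
  √(⟪v, v⟫ + ω v ^ 2) + ω v

theorem stdStationaryForm_self_nonpos_iff (ω : V →ₗ[ℝ] ℝ) {τ : ℝ} (hτ : 0 < τ) (v : V) :
    stdStationaryForm ω (τ, v) (τ, v) ≤ 0 ↔ fermatMetric ω v ≤ τ := by
  have hv : 0 ≤ ⟪v, v⟫ := real_inner_self_nonneg
  rw [fermatMetric, ← le_sub_iff_add_le, Real.sqrt_le_iff, stdStationaryForm]
  constructor
  · intro h
    refine ⟨?_, by nlinarith⟩
    by_contra! hω
    nlinarith
  · rintro ⟨-, h⟩
    nlinarith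

noncomputable def graphL2 (ω : V →L[ℝ] ℝ) : V →L[ℝ] WithLp 2 (V × ℝ) :=
  (WithLp.prodContinuousLinearEquiv 2 ℝ V ℝ).symm.toContinuousLinearMap.comp
    ((ContinuousLinearMap.id ℝ V).prod ω)

theorem fermatMetric_eq_norm_graphL2_add (ω : V →L[ℝ] ℝ) (v : V) :
    fermatMetric (ω : V →ₗ[ℝ] ℝ) v = ‖graphL2 ω v‖ + ω v := by
  simp [fermatMetric, graphL2, WithLp.prod_norm_eq_of_L2]

theorem fermatMetric_sub_le_of_deriv_le (ω : V →L[ℝ] ℝ) {t : ℝ → ℝ} {x : ℝ → V} {a b : ℝ}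
    (hab : a ≤ b) (ht : Differentiable ℝ t) (hx : Differentiable ℝ x)
    (h : ∀ s ∈ Ico a b, fermatMetric (ω : V →ₗ[ℝ] ℝ) (deriv x s) ≤ deriv t s) :
    fermatMetric (ω : V →ₗ[ℝ] ℝ) (x b - x a) ≤ t b - t a := by
  have hchord : ‖graphL2 ω (x b - x a)‖ ≤ (t b - ω (x b)) - (t a - ω (x a)) := by
    refine image_norm_le_of_norm_deriv_right_le_deriv_boundary
      (f := fun s => graphL2 ω (x s - x a)) (f' := fun s => graphL2 ω (deriv x s))
      (B := fun s => (t s - ω (x s)) - (t a - ω (x a)))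
      (B' := fun s => deriv t s - ω (deriv x s)) ?_ ?_ (by simp) ?_ ?_ ⟨hab, le_rfl⟩
    · exact ((graphL2 ω).continuous.comp (hx.continuous.sub continuous_const)).continuousOn
    · exact fun s _ => ((graphL2 ω).hasFDerivAt.comp_hasDerivAt s
        ((hx s).hasDerivAt.sub_const (x a))).hasDerivWithinAt
    · exact fun s => ((ht s).hasDerivAt.sub
        (ω.hasFDerivAt.comp_hasDerivAt s (hx s).hasDerivAt)).sub_const _
    · intro s hs
      have := h s hs
      rw [fermatMetric_eq_norm_graphL2_add] at this
      linarith
  rw [fermatMetric_eq_norm_graphL2_add, ω.map_sub]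
  linarith

end

/-- In the flat standard stationary spacetime, there is a smooth future-directed
causal curve from `(0,p)` to `(t₀,q)` if and only if `t₀ > 0` and `t₀ ≥ F(q − p)`,
where `F(v) = √(⟨v,v⟩ + ω(v)²) + ω(v)` is the Fermat metric. -/
theorem causal_future_eq_closed_fermat_ball
    {V : Type*} [NormedAddCommGroup V] [InnerProductSpace ℝ V] [FiniteDimensional ℝ V]
    (ω : V →ₗ[ℝ] ℝ)
    (F : V → ℝ)
    (hF : ∀ v : V, F v = Real.sqrt (⟪v, v⟫ + (ω v) ^ 2) + ω v)
    (p q : V) (t₀ : ℝ) :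
    (∃ t : ℝ → ℝ, ∃ x : ℝ → V,
      ContDiff ℝ (⊤ : ℕ∞) t ∧ ContDiff ℝ (⊤ : ℕ∞) x ∧
      t 0 = 0 ∧ x 0 = p ∧ t 1 = t₀ ∧ x 1 = q ∧
      ∀ s ∈ Set.Icc (0 : ℝ) 1, 0 < deriv t s ∧
        stdStationaryForm ω (deriv t s, deriv x s) (deriv t s, deriv x s) ≤ 0)
    ↔ (0 < t₀ ∧ F (q - p) ≤ t₀) := by
  obtain rfl : F = fermatMetric ω := funext hF
  constructor
  · rintro ⟨t, x, ht, hx, ht0, rfl, rfl, rfl, hcausal⟩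
    have ht' : Differentiable ℝ t := ht.differentiable (by simp)
    have hmono : StrictMonoOn t (Icc 0 1) := strictMonoOn_of_deriv_pos (convex_Icc 0 1)
      ht'.continuous.continuousOn fun s hs => (hcausal s (interior_subset hs)).1
    have hspeed : ∀ s ∈ Ico (0 : ℝ) 1, fermatMetric ω (deriv x s) ≤ deriv t s := fun s hs =>
      have ⟨hpos, hnull⟩ := hcausal s (Ico_subset_Icc_self hs)
      (stdStationaryForm_self_nonpos_iff ω hpos _).1 hnull
    refine ⟨ht0 ▸ hmono ⟨le_rfl, zero_le_one⟩ ⟨zero_le_one, le_rfl⟩ zero_lt_one, ?_⟩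
    simpa [ht0] using fermatMetric_sub_le_of_deriv_le ω.toContinuousLinearMap zero_le_one ht'
      (hx.differentiable (by simp)) hspeed
  · rintro ⟨ht₀, hle⟩
    refine ⟨fun s => s * t₀, fun s => p + s • (q - p), by fun_prop, by fun_prop,
      by simp, by simp, by simp, by simp, fun s _ => ?_⟩
    have hdt : deriv (fun s => s * t₀) s = t₀ := by simp
    have hdx : deriv (fun s : ℝ => p + s • (q - p)) s = q - p := by
      simpa using (((hasDerivAt_id s).smul_const (q - p)).const_add p).deriv
    rw [hdt, hdx, stdStationaryForm_self_nonpos_iff ω ht₀]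
    exact ⟨ht₀, hle⟩
end

section
/- Let V be a finite-dimensional real vector space and L : V → ℝ a twice continuously differentiable function that is positively homogeneous of degree 2, i.e. L(λv) = λ²L(v) for all λ > 0 and all v ∈ V. Then L is a quadratic form: L(v) = B(v,v) for the symmetric bilinear form B = (1/2)·D²L(0). In particular, a Finsler metric whose square is smooth at the zero section comes from a Riemannian (quadratic) metric. -/
/-!
Along the ray `t ↦ t • v` the homogeneity makes `L (t • v) = t ^ 2 * L v` for `t > 0`, so
differentiating twice in `t` gives `D²L(t • v)(v, v) = 2 * L v` for every `t > 0`. Since `L` is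
`C²`, the Hessian is continuous, and letting `t → 0⁺` yields `D²L(0)(v, v) = 2 * L v`.
-/

open Filter Set Topology

section LineRestriction

variable {𝕜 E F : Type*} [NontriviallyNormedField 𝕜] [NormedAddCommGroup E] [NormedSpace 𝕜 E]
  [NormedAddCommGroup F] [NormedSpace 𝕜 F]

theorem hasDerivAt_comp_smul_const {f : E → F} {v : E} {t : 𝕜}
    (hf : DifferentiableAt 𝕜 f (t • v)) :
    HasDerivAt (fun s : 𝕜 => f (s • v)) (fderiv 𝕜 f (t • v) v) t := by
  simpa [Function.comp_def] using
    hf.hasFDerivAt.comp_hasDerivAt t ((hasDerivAt_id t).smul_const v)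

theorem hasDerivAt_fderiv_comp_smul_const_apply {f : E → F} {v : E} {t : 𝕜}
    (hf : DifferentiableAt 𝕜 (fderiv 𝕜 f) (t • v)) :
    HasDerivAt (fun s : 𝕜 => fderiv 𝕜 f (s • v) v) (fderiv 𝕜 (fderiv 𝕜 f) (t • v) v v) t := by
  simpa using (hasDerivAt_comp_smul_const hf).clm_apply (hasDerivAt_const t v)

end LineRestriction

section Homogeneous

variable {E : Type*} [NormedAddCommGroup E] [NormedSpace ℝ E] {L : E → ℝ} {v : E}

theorem fderiv_smul_apply_of_homogeneous (hhom : ∀ c : ℝ, 0 < c → L (c • v) = c ^ 2 * L v)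
    {t : ℝ} (ht : 0 < t) (hL : DifferentiableAt ℝ L (t • v)) :
    fderiv ℝ L (t • v) v = 2 * t * L v := by
  have hpoly : HasDerivAt (fun s : ℝ => s ^ 2 * L v) (2 * t * L v) t := by
    simpa using (hasDerivAt_pow 2 t).mul_const (L v)
  have hray : (fun s : ℝ => L (s • v)) =ᶠ[𝓝 t] fun s => s ^ 2 * L v :=
    eventually_of_mem (Ioi_mem_nhds ht) fun s hs => hhom s hs
  exact (hasDerivAt_comp_smul_const hL).unique (hpoly.congr_of_eventuallyEq hray)

theorem fderiv_fderiv_smul_apply_of_homogeneous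
    (hhom : ∀ c : ℝ, 0 < c → L (c • v) = c ^ 2 * L v) (hL : Differentiable ℝ L)
    {t : ℝ} (ht : 0 < t) (hDL : DifferentiableAt ℝ (fderiv ℝ L) (t • v)) :
    fderiv ℝ (fderiv ℝ L) (t • v) v v = 2 * L v := by
  have hline : HasDerivAt (fun s : ℝ => 2 * s * L v) (2 * L v) t := by
    simpa using ((hasDerivAt_id t).const_mul 2).mul_const (L v)
  have hray : (fun s : ℝ => fderiv ℝ L (s • v) v) =ᶠ[𝓝 t] fun s => 2 * s * L v :=
    eventually_of_mem (Ioi_mem_nhds ht) fun s hs =>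
      fderiv_smul_apply_of_homogeneous hhom hs (hL _)
  exact (hasDerivAt_fderiv_comp_smul_const_apply hDL).unique (hline.congr_of_eventuallyEq hray)

end Homogeneous

theorem homogeneous_C2_is_quadratic_general
    {V : Type*} [NormedAddCommGroup V] [NormedSpace ℝ V]
    (L : V → ℝ)
    (hL : ContDiff ℝ 2 L)
    (hhom : ∀ c : ℝ, 0 < c → ∀ v : V, L (c • v) = c ^ 2 * L v) :
    ∀ v : V, L v = (1 / 2) * fderiv ℝ (fderiv ℝ L) 0 v v := by
  intro v
  have hDL : ContDiff ℝ 1 (fderiv ℝ L) := hL.fderiv_right le_rfl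
  have hessian_cont : Continuous fun t : ℝ => fderiv ℝ (fderiv ℝ L) (t • v) v v := by
    fun_prop
  have hessian_ray : EqOn (fun t : ℝ => fderiv ℝ (fderiv ℝ L) (t • v) v v) (fun _ => 2 * L v)
      (Ioi 0) := fun t ht =>
    fderiv_fderiv_smul_apply_of_homogeneous (fun c hc => hhom c hc v)
      (hL.differentiable two_ne_zero) ht (hDL.differentiable one_ne_zero _)
  have hessian_zero : fderiv ℝ (fderiv ℝ L) ((0 : ℝ) • v) v v = 2 * L v :=
    hessian_ray.of_subset_closure hessian_cont.continuousOn continuousOn_const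
      Ioi_subset_Ici_self (closure_Ioi 0).symm.subset (mem_Ici.2 le_rfl)
  rw [zero_smul] at hessian_zero
  rw [hessian_zero]
  ring

/-- A twice continuously differentiable function `L : V → ℝ` on a finite-dimensional
real vector space that is positively homogeneous of degree 2 (`L(λv) = λ²L(v)` for
all `λ > 0`) is a quadratic form: `L(v) = B(v,v)` where `B = (1/2)·D²L(0)` is one
half of the Hessian of `L` at the origin. In particular, a Finsler metric whose
square is smooth at the zero section comes from a Riemannian (quadratic) metric. -/
theorem homogeneous_C2_is_quadratic
    {V : Type*} [NormedAddCommGroup V] [NormedSpace ℝ V] [FiniteDimensional ℝ V]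
    (L : V → ℝ)
    (hL : ContDiff ℝ 2 L)
    (hhom : ∀ c : ℝ, 0 < c → ∀ v : V, L (c • v) = c ^ 2 * L v) :
    ∀ v : V, L v = (1 / 2) * fderiv ℝ (fderiv ℝ L) 0 v v :=
  homogeneous_C2_is_quadratic_general L hL hhom
end

section
/- Let V be a finite-dimensional real vector space of dimension n ≥ 2, η a symmetric bilinear form on V of Lorentzian signature (one negative, n−1 positive directions), m > 0 a real number and a ∈ V a fixed vector. On the open set A = {v ∈ V : η(v,v) < 0} of η-timelike vectors, define the Lorentz-violating Lagrangian F(v) = m·√(−η(v,v)) + η(v,a) and L = F². Then for v ∈ A, the fundamental tensor of L at v is degenerate if and only if F(v) = m·√(−η(v,v)) + η(v,a) = 0. -/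
open Filter Topology ContinuousLinearMap

theorem exists_ne_zero_forall_mul_add_mul_eq_zero_iff {K M : Type*} [Field K] [AddCommGroup M]
    [Module K M] (ℓ : M →ₗ[K] K) (H : M → M → K) {v : M} (hv : v ≠ 0)
    (hHv : ∀ w, H v w = 0) (hHv' : ∀ u, H u v = 0)
    (hker : ∀ u, (∀ w, H u w = 0) → ∃ t : K, u = t • v) :
    (∃ u, u ≠ 0 ∧ ∀ w, ℓ u * ℓ w + ℓ v * H u w = 0) ↔ ℓ v = 0 := by
  constructor
  · rintro ⟨u, hu, hdeg⟩
    by_contra hℓv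
    have hℓu : ℓ u = 0 := by simpa [hHv', hℓv] using hdeg v
    obtain ⟨t, rfl⟩ := hker u fun w => by simpa [hℓu, hℓv] using hdeg w
    have ht : t = 0 := by simpa [hℓv] using hℓu
    exact hu (by rw [ht, zero_smul])
  · intro hℓv
    exact ⟨v, hv, fun w => by rw [hℓv, hHv, zero_mul, zero_mul, add_zero]⟩

section SecondDerivative

variable {𝕜 E : Type*} [NontriviallyNormedField 𝕜] [NormedAddCommGroup E] [NormedSpace 𝕜 E]

theorem hasFDerivAt_fderiv_sq {f : E → 𝕜} {f' : E → E →L[𝕜] 𝕜} {f'' : E →L[𝕜] E →L[𝕜] 𝕜}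
    {x : E} (hf : ∀ᶠ y in 𝓝 x, HasFDerivAt f (f' y) y) (hf' : HasFDerivAt f' f'' x) :
    HasFDerivAt (fderiv 𝕜 fun y => f y ^ 2)
      ((2 : 𝕜) • (f x • f'' + (f' x).smulRight (f' x))) x := by
  have hderiv : (fderiv 𝕜 fun y => f y ^ 2) =ᶠ[𝓝 x] fun y => (2 * f y) • f' y :=
    hf.mono fun y hy => by simpa [mul_smul] using (hy.pow 2).fderiv
  refine (((hf.self_of_nhds.const_mul 2).smul hf').congr_fderiv ?_).congr_of_eventuallyEq hderiv
  ext u w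
  simp only [add_apply, smul_apply, smulRight_apply, smul_eq_mul, smul_add]
  ring

end SecondDerivative

theorem fundTensor_sq {V : Type*} [NormedAddCommGroup V] [NormedSpace ℝ V] {f : V → ℝ}
    {f' : V → V →L[ℝ] ℝ} {f'' : V →L[ℝ] V →L[ℝ] ℝ} {x : V}
    (hf : ∀ᶠ y in 𝓝 x, HasFDerivAt f (f' y) y) (hf' : HasFDerivAt f' f'' x) (u w : V) :
    fundTensor (fun y => f y ^ 2) x u w = f' x u * f' x w + f x * f'' u w := by
  rw [fundTensor, (hasFDerivAt_fderiv_sq hf hf').fderiv]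
  simp only [smul_add, add_apply, smul_apply, smulRight_apply, smul_eq_mul]
  ring

section Randers

variable {V : Type*} [NormedAddCommGroup V] [NormedSpace ℝ V] (η : V →L[ℝ] V →L[ℝ] ℝ)

noncomputable def timelikeNorm (y : V) : ℝ := Real.sqrt (-η y y)

noncomputable def randers (m : ℝ) (a y : V) : ℝ := m * timelikeNorm η y + η y a

noncomputable def randersGrad (m : ℝ) (a y : V) : V →L[ℝ] ℝ :=
  (-m) • ((timelikeNorm η y)⁻¹ • η y) + η a

noncomputable def randersHess (m : ℝ) (y : V) : V →L[ℝ] V →L[ℝ] ℝ :=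
  (-m) • ((timelikeNorm η y)⁻¹ • η + ((timelikeNorm η y ^ 3)⁻¹ • η y).smulRight (η y))

variable {η} {x : V}

theorem timelikeNorm_pos (hx : η x x < 0) : 0 < timelikeNorm η x :=
  Real.sqrt_pos.mpr (neg_pos.mpr hx)

theorem sq_timelikeNorm (hx : η x x < 0) : timelikeNorm η x ^ 2 = -η x x :=
  Real.sq_sqrt (neg_nonneg.mpr hx.le)

theorem hasFDerivAt_timelikeNorm (hη : ∀ u w, η u w = η w u) (hx : η x x < 0) :
    HasFDerivAt (timelikeNorm η) (-(timelikeNorm η x)⁻¹ • η x) x := by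
  have hquad : HasFDerivAt (fun y => η y y) (η x + η.flip x) x :=
    η.hasFDerivAt.clm_apply (hasFDerivAt_id x)
  refine (hquad.neg.sqrt (neg_ne_zero.mpr hx.ne)).congr_fderiv ?_
  ext w
  have hN := (timelikeNorm_pos hx).ne'
  simp only [timelikeNorm] at hN
  simp only [Pi.neg_apply, one_div, add_apply, neg_apply, smul_apply, flip_apply, hη w x,
    smul_eq_mul, timelikeNorm]
  field_simp
  ring

theorem hasFDerivAt_inv_timelikeNorm_smul (hη : ∀ u w, η u w = η w u) (hx : η x x < 0) :
    HasFDerivAt (fun y => (timelikeNorm η y)⁻¹ • η y)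
      ((timelikeNorm η x)⁻¹ • η + ((timelikeNorm η x ^ 3)⁻¹ • η x).smulRight (η x)) x := by
  have hN := (timelikeNorm_pos hx).ne'
  refine (((hasDerivAt_inv hN).comp_hasFDerivAt x (hasFDerivAt_timelikeNorm hη hx)).smul
    η.hasFDerivAt).congr_fderiv ?_
  ext u w
  simp only [Function.comp_apply, add_apply, smul_apply, smulRight_apply,
    smul_eq_mul]
  field_simp

theorem hasFDerivAt_randers (hη : ∀ u w, η u w = η w u) (m : ℝ) (a : V) (hx : η x x < 0) :
    HasFDerivAt (randers η m a) (randersGrad η m a x) x := by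
  refine (((hasFDerivAt_timelikeNorm hη hx).const_mul m).add
    (η.flip a).hasFDerivAt).congr_fderiv ?_
  ext w
  simp only [randersGrad, add_apply, smul_apply, smul_eq_mul, flip_apply, hη w a]
  ring

theorem hasFDerivAt_randersGrad (hη : ∀ u w, η u w = η w u) (m : ℝ) (a : V) (hx : η x x < 0) :
    HasFDerivAt (randersGrad η m a) (randersHess η m x) x :=
  ((hasFDerivAt_inv_timelikeNorm_smul hη hx).const_smul (-m)).add_const (η a)

theorem randersGrad_self (hη : ∀ u w, η u w = η w u) (m : ℝ) (a : V) (hx : η x x < 0) :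
    randersGrad η m a x x = randers η m a x := by
  have hN := (timelikeNorm_pos hx).ne'
  have hN2 := sq_timelikeNorm hx
  simp only [randersGrad, randers, add_apply, smul_apply, smul_eq_mul, hη a x]
  field_simp
  linear_combination (-m) * hN2

theorem randersHess_self_left (m : ℝ) (hx : η x x < 0) (w : V) : randersHess η m x x w = 0 := by
  have hN := (timelikeNorm_pos hx).ne'
  have hN2 := sq_timelikeNorm hx
  simp only [randersHess, add_apply, smul_apply, smulRight_apply, smul_eq_mul]
  field_simp
  linear_combination (-m * η x w) * hN2

theorem randersHess_self_right (hη : ∀ u w, η u w = η w u) (m : ℝ) (hx : η x x < 0) (u : V) :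
    randersHess η m x u x = 0 := by
  have hN := (timelikeNorm_pos hx).ne'
  have hN2 := sq_timelikeNorm hx
  simp only [randersHess, add_apply, smul_apply, smulRight_apply, smul_eq_mul, hη u x]
  field_simp
  linear_combination (-m * η x u) * hN2

theorem exists_eq_smul_of_randersHess_eq_zero {m : ℝ} (hm : m ≠ 0)
    (hnd : ∀ u, (∀ w, η u w = 0) → u = 0) (hx : η x x < 0) {u : V}
    (hu : ∀ w, randersHess η m x u w = 0) : ∃ t : ℝ, u = t • x := by
  have hN := (timelikeNorm_pos hx).ne'
  set t := (timelikeNorm η x ^ 2)⁻¹ * η x u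
  have hker : u + t • x = 0 := hnd _ fun w => by
    have huw := hu w
    simp only [randersHess, add_apply, smul_apply, smulRight_apply, smul_eq_mul, mul_eq_zero,
      neg_eq_zero, hm, false_or] at huw
    simp only [t, map_add, map_smul, add_apply, smul_apply, smul_eq_mul]
    field_simp at huw ⊢
    linear_combination huw
  exact ⟨-t, by rw [neg_smul]; exact eq_neg_of_add_eq_zero_left hker⟩

end Randers

theorem lorentz_violating_degenerate_iff_general
    {V : Type*} [NormedAddCommGroup V] [NormedSpace ℝ V] [FiniteDimensional ℝ V]
    {n : ℕ}
    (η : V →ₗ[ℝ] V →ₗ[ℝ] ℝ)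
    (hsym : ∀ u w : V, η u w = η w u)
    (bas : Module.Basis (Fin n) ℝ V)
    (hbas : ∀ i j : Fin n,
      η (bas i) (bas j) = if i = j then (if (i : ℕ) = 0 then -1 else 1) else 0)
    (m : ℝ) (hm : 0 < m) (a : V)
    (F L : V → ℝ)
    (hF : ∀ v : V, F v = m * Real.sqrt (-(η v v)) + η v a)
    (hL : ∀ v : V, L v = (F v) ^ 2)
    (v : V) (hv : η v v < 0) :
    (∃ u : V, u ≠ 0 ∧ ∀ w : V, fundTensor L v u w = 0) ↔ F v = 0 := by
  set η' := η.toContinuousBilinearMap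
  have hsym' : ∀ u w, η' u w = η' w u := hsym
  have hv' : η' v v < 0 := hv
  have hnd : ∀ u, (∀ w, η' u w = 0) → u = 0 :=
    LinearMap.IsOrthoᵢ.separatingLeft_of_not_isOrtho_basis_self bas
      (fun i j hij => (hbas i j).trans (if_neg hij))
      (fun i => by rw [hbas, if_pos rfl]; split_ifs <;> norm_num)
  have hgrad : ∀ᶠ y in 𝓝 v, HasFDerivAt (randers η' m a) (randersGrad η' m a y) y :=
    ((by fun_prop : Continuous fun y => η' y y).continuousAt.eventually_lt continuousAt_const
      hv').mono fun y hy => hasFDerivAt_randers hsym' m a hy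
  have hFv : F v = randers η' m a v := hF v
  have hL' : L = fun y => randers η' m a y ^ 2 := funext fun y => by rw [hL, hF]; rfl
  simp_rw [hL', fundTensor_sq hgrad (hasFDerivAt_randersGrad hsym' m a hv'), hFv,
    ← randersGrad_self hsym' m a hv']
  exact exists_ne_zero_forall_mul_add_mul_eq_zero_iff (randersGrad η' m a v : V →ₗ[ℝ] ℝ)
    (randersHess η' m v · ·) (fun h => by simp [h] at hv) (randersHess_self_left m hv')
    (randersHess_self_right hsym' m hv')
    (fun u hu => exists_eq_smul_of_randersHess_eq_zero hm.ne' hnd hv' hu)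

/-- Lorentz-violating Lagrangian: let `η` be a symmetric bilinear form of Lorentzian
signature (diagonalizable as `diag(−1, 1, …, 1)` in some basis, `n ≥ 2`), `m > 0` and
`a ∈ V`. On the open cone `A = {v : η(v,v) < 0}` of `η`-timelike vectors, set
`F(v) = m·√(−η(v,v)) + η(v,a)` and `L = F²`. Then for `v ∈ A`, the fundamental
tensor of `L` at `v` is degenerate if and only if `F(v) = 0`. -/
theorem lorentz_violating_degenerate_iff
    {V : Type*} [NormedAddCommGroup V] [NormedSpace ℝ V] [FiniteDimensional ℝ V]
    {n : ℕ} (hn : 2 ≤ n) (hdim : Module.finrank ℝ V = n)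
    (η : V →ₗ[ℝ] V →ₗ[ℝ] ℝ)
    (hsym : ∀ u w : V, η u w = η w u)
    (bas : Module.Basis (Fin n) ℝ V)
    (hbas : ∀ i j : Fin n,
      η (bas i) (bas j) = if i = j then (if (i : ℕ) = 0 then -1 else 1) else 0)
    (m : ℝ) (hm : 0 < m) (a : V)
    (F L : V → ℝ)
    (hF : ∀ v : V, F v = m * Real.sqrt (-(η v v)) + η v a)
    (hL : ∀ v : V, L v = (F v) ^ 2)
    (v : V) (hv : η v v < 0) :
    (∃ u : V, u ≠ 0 ∧ ∀ w : V, fundTensor L v u w = 0) ↔ F v = 0 :=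
  lorentz_violating_degenerate_iff_general η hsym bas hbas m hm a F L hF hL v hv
end
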